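/- arXiv:2503.12673 — 3 statements merged into one kernel-verified Lean document; each statement's English description precedes it below -/
import Mathlib

section
/- Every finitely generated solvable group in which every element has finite order is finite. -/
/-!
Induct on the derived length. The abelianization of a finitely generated torsion group is a
finitely generated torsion abelian group, hence finite; so the commutator subgroup has finite
index, and is therefore finitely generated by Schreier's lemma. It is again torsion, of smaller
derived length, hence finite by induction, and `G` is finite as an extension of a finite group by
a finite group.
-/

open Subgroup

theorem map_subtype_derivedSeries_le {G : Type*} [Group G] {H : Subgroup G} {k : ℕ}
    (hH : H ≤ derivedSeries G k) (n : ℕ) :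
    (derivedSeries H n).map H.subtype ≤ derivedSeries G (k + n) := by
  induction n with
  | zero => rwa [derivedSeries_zero, ← MonoidHom.range_eq_map, range_subtype]
  | succ n ih =>
    rw [derivedSeries_succ, map_commutator, ← add_assoc, derivedSeries_succ]
    exact commutator_mono ih ih

theorem derivedSeries_commutator_eq_bot {G : Type*} [Group G] {n : ℕ}
    (h : derivedSeries G (n + 1) = ⊥) : derivedSeries (commutator G) n = ⊥ := by
  rw [← map_eq_bot_iff_of_injective _ (commutator G).subtype_injective, eq_bot_iff, ← h,
    add_comm]
  exact map_subtype_derivedSeries_le (derivedSeries_one G).ge n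

theorem Abelianization.finite_of_fg_of_isMulTorsion {G : Type*} [Group G] [Group.FG G]
    (hG : IsMulTorsion G) : Finite (Abelianization G) :=
  have hsurj := QuotientGroup.mk'_surjective (commutator G)
  have : Group.FG (Abelianization G) := Group.fg_of_surjective hsurj
  CommGroup.finite_of_fg_isMulTorsion _ (hG.of_surjective hsurj)

theorem finite_of_fg_of_isMulTorsion_of_derivedSeries_eq_bot {n : ℕ} :
    ∀ {G : Type*} [Group G] [Group.FG G], IsMulTorsion G → derivedSeries G n = ⊥ → Finite G := by
  induction n with
  | zero =>
    intro G _ _ _ h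
    have : Subsingleton G := subsingleton_iff.mp (subsingleton_of_bot_eq_top h.symm)
    exact Finite.of_subsingleton
  | succ n ih =>
    intro G _ _ hG h
    have : Finite (G ⧸ commutator G) := Abelianization.finite_of_fg_of_isMulTorsion hG
    have : FiniteIndex (commutator G) := finiteIndex_of_finite_quotient
    have : Finite (commutator G) :=
      ih (hG.subgroup (commutator G)) (derivedSeries_commutator_eq_bot h)
    exact Finite.of_subgroup_quotient (commutator G)

/-- Every finitely generated solvable torsion group is finite. -/
theorem fg_solvable_torsion_finite (G : Type*) [Group G] [Group.IsSolvable G]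
    (hfg : Group.FG G) (htor : ∀ g : G, IsOfFinOrder g) : Finite G := by
  obtain ⟨n, hn⟩ := Group.IsSolvable.solvable (G := G)
  exact finite_of_fg_of_isMulTorsion_of_derivedSeries_eq_bot htor hn
end

section
/- Let G be a group and U, V open subgroups such that the set Mor(U,U) of right cosets of U that are also left cosets of U is finite (e.g., because each such coset is a double coset of U and U has finitely many double cosets). If there exists a right coset of U that is a left coset of V, then the set Mor(U,V) of right cosets of U that are left cosets of V has the same cardinality as Mor(U,U); in particular it is finite. -/
open Pointwise

/-- `Mor U V` is the set of subsets of `G` that are simultaneously a right coset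
of `U` and a left coset of `V`. -/
def Mor {G : Type*} [Group G] (U V : Subgroup G) : Set (Set G) :=
  {A : Set G | (∃ g : G, A = (U : Set G) * ({g} : Set G)) ∧ ∃ g : G, A = ({g} : Set G) * (V : Set G)}

/-!
The sets `Mor U V` are the morphisms of a groupoid whose objects are the subgroups of `G`,
composed by pointwise multiplication, with identities `U` and inverses `A ↦ A⁻¹`.
Composing with a fixed `B ∈ Mor V W` is therefore a bijection `Mor U V ≃ Mor U W`.
-/

namespace Mor

variable {G : Type*} [Group G] {U V W : Subgroup G} {A B : Set G}

theorem coe_mul_eq (hA : A ∈ Mor U V) : (U : Set G) * A = A := by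
  obtain ⟨⟨a, rfl⟩, -⟩ := hA
  rw [← mul_assoc, coe_mul_coe]

theorem mul_coe_eq (hA : A ∈ Mor U V) : A * (V : Set G) = A := by
  obtain ⟨-, a, rfl⟩ := hA
  rw [mul_assoc, coe_mul_coe]

theorem mul_mem (hA : A ∈ Mor U V) (hB : B ∈ Mor V W) : A * B ∈ Mor U W := by
  obtain ⟨a, ha⟩ := hA.1
  obtain ⟨b, hb⟩ := hB.1
  obtain ⟨a', ha'⟩ := hA.2
  obtain ⟨b', hb'⟩ := hB.2
  refine ⟨⟨a * b, ?_⟩, a' * b', ?_⟩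
  · rw [hb, ← mul_assoc, mul_coe_eq hA, ha, mul_assoc, Set.singleton_mul_singleton]
  · rw [ha', mul_assoc, coe_mul_eq hB, hb', ← mul_assoc, Set.singleton_mul_singleton]

theorem inv_mem (hA : A ∈ Mor U V) : A⁻¹ ∈ Mor V U := by
  obtain ⟨⟨a, rfl⟩, a', ha'⟩ := hA
  refine ⟨⟨a'⁻¹, ?_⟩, a⁻¹, ?_⟩
  · rw [ha', mul_inv_rev, Set.inv_singleton, inv_coe_set]
  · rw [mul_inv_rev, Set.inv_singleton, inv_coe_set]

theorem mul_inv_eq (hA : A ∈ Mor U V) : A * A⁻¹ = U := by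
  obtain ⟨⟨a, rfl⟩, -⟩ := hA
  rw [mul_inv_rev, Set.inv_singleton, inv_coe_set, mul_assoc, ← mul_assoc ({a} : Set G),
    Set.singleton_mul_singleton, mul_inv_cancel, Set.singleton_one, one_mul,
    coe_mul_coe]

theorem inv_mul_eq (hA : A ∈ Mor U V) : A⁻¹ * A = V := by
  simpa using mul_inv_eq (inv_mem hA)

def mulRightEquiv (hB : B ∈ Mor V W) : Mor U V ≃ Mor U W where
  toFun A := ⟨A * B, mul_mem A.2 hB⟩
  invFun C := ⟨C * B⁻¹, mul_mem C.2 (inv_mem hB)⟩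
  left_inv A := Subtype.ext <| by
    rw [Subtype.coe_mk, mul_assoc, mul_inv_eq hB, mul_coe_eq A.2]
  right_inv C := Subtype.ext <| by
    rw [Subtype.coe_mk, mul_assoc, inv_mul_eq hB, mul_coe_eq C.2]

end Mor

theorem mor_equiv_of_nonempty_general (G : Type*) [Group G] (U V : Subgroup G)
    (hfin : (Mor U U).Finite) (hne : (Mor U V).Nonempty) :
    Nonempty (Mor U U ≃ Mor U V) ∧ (Mor U V).Finite := by
  obtain ⟨B, hB⟩ := hne
  let e : Mor U U ≃ Mor U V := Mor.mulRightEquiv hB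
  have : Finite (Mor U U) := hfin.to_subtype
  exact ⟨⟨e⟩, Set.finite_coe_iff.mp (.of_equiv _ e)⟩

/-- If `Mor(U,U)` is finite and there exists a right coset of `U` that is a left
coset of `V`, then `Mor(U,V)` has the same cardinality as `Mor(U,U)`; in
particular it is finite. -/
theorem mor_equiv_of_nonempty (G : Type*) [Group G] [TopologicalSpace G]
    [IsTopologicalGroup G] (U V : Subgroup G)
    (hU : IsOpen (U : Set G)) (hV : IsOpen (V : Set G))
    (hfin : (Mor U U).Finite) (hne : (Mor U V).Nonempty) :
    Nonempty (Mor U U ≃ Mor U V) ∧ (Mor U V).Finite :=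
  mor_equiv_of_nonempty_general G U V hfin hne
end

section
/- The nontrivial closed subgroups of the additive group ℚ_p of p-adic numbers are exactly ℚ_p itself and the subgroups p^r ℤ_p for r ∈ ℤ. -/
open Padic

variable {p : ℕ} [Fact p.Prime]

private lemma ball_char (r : ℤ) (x : ℚ_[p]) :
    (∃ y : ℤ_[p], x = (p : ℚ_[p]) ^ r * (y : ℚ_[p])) ↔ ‖x‖ ≤ (p : ℝ) ^ (-r) := by
  have hp0 : (p : ℚ_[p]) ≠ 0 := by
    exact_mod_cast Nat.cast_ne_zero.mpr (Fact.out : p.Prime).ne_zero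
  constructor
  · rintro ⟨y, rfl⟩
    rw [norm_mul, Padic.norm_p_zpow]
    calc (p : ℝ) ^ (-r) * ‖(y : ℚ_[p])‖ ≤ (p : ℝ) ^ (-r) * 1 := by
          refine mul_le_mul_of_nonneg_left ?_ (by positivity)
          exact y.2
      _ = (p : ℝ) ^ (-r) := mul_one _
  · intro h
    have hz : ‖(p : ℚ_[p]) ^ (-r) * x‖ ≤ 1 := by
      rw [norm_mul, Padic.norm_p_zpow, neg_neg]
      calc (p : ℝ) ^ r * ‖x‖ ≤ (p : ℝ) ^ r * (p : ℝ) ^ (-r) := by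
            refine mul_le_mul_of_nonneg_left h (by positivity)
        _ = 1 := by
            rw [← zpow_add₀ (by exact_mod_cast (Fact.out : p.Prime).pos.ne'), add_neg_cancel,
              zpow_zero]
    refine ⟨⟨(p : ℚ_[p]) ^ (-r) * x, hz⟩, ?_⟩
    show x = (p : ℚ_[p]) ^ r * ((p : ℚ_[p]) ^ (-r) * x)
    rw [← mul_assoc, ← zpow_add₀ hp0, add_neg_cancel, zpow_zero, one_mul]

/-- A closed subgroup of `ℚ_[p]` is stable under multiplication by `p`-adic integers. -/
private lemma mul_int_mem {H : AddSubgroup ℚ_[p]} (hc : IsClosed (H : Set ℚ_[p]))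
    {x : ℚ_[p]} (hx : x ∈ H) (y : ℤ_[p]) : x * (y : ℚ_[p]) ∈ H := by
  have hcont : Continuous fun z : ℤ_[p] => x * (z : ℚ_[p]) :=
    continuous_const.mul continuous_subtype_val
  have hSc : IsClosed ((fun z : ℤ_[p] => x * (z : ℚ_[p])) ⁻¹' (H : Set ℚ_[p])) :=
    hc.preimage hcont
  have hdense : Dense ((fun z : ℤ_[p] => x * (z : ℚ_[p])) ⁻¹' (H : Set ℚ_[p])) := by
    refine Dense.mono ?_ PadicInt.denseRange_intCast
    rintro _ ⟨n, rfl⟩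
    show x * ((n : ℤ_[p]) : ℚ_[p]) ∈ H
    rw [PadicInt.coe_intCast]
    simpa [mul_comm] using AddSubgroup.zsmul_mem H hx n
  have := hSc.closure_eq ▸ hdense.closure_eq
  exact (Set.eq_univ_iff_forall.mp this y)

/-- The nontrivial closed subgroups of the additive group `ℚ_p` are exactly
`ℚ_p` itself and the subgroups `p^r ℤ_p` for `r ∈ ℤ`. -/
theorem closed_subgroups_of_padic (p : ℕ) [Fact p.Prime]
    (H : AddSubgroup ℚ_[p]) :
    (IsClosed (H : Set ℚ_[p]) ∧ H ≠ ⊥) ↔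
      ((H : Set ℚ_[p]) = Set.univ ∨
        ∃ r : ℤ, (H : Set ℚ_[p]) =
          {x : ℚ_[p] | ∃ y : ℤ_[p], x = (p : ℚ_[p]) ^ r * (y : ℚ_[p])}) := by
  have hp1 : (1 : ℝ) < (p : ℝ) := by exact_mod_cast (Fact.out : p.Prime).one_lt
  have hpQ : (p : ℚ_[p]) ≠ 0 := by
    exact_mod_cast Nat.cast_ne_zero.mpr (Fact.out : p.Prime).ne_zero
  constructor
  · rintro ⟨hc, hbot⟩
    obtain ⟨x0, hx0H, hx0⟩ : ∃ x ∈ H, x ≠ 0 := by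
      by_contra hcon
      push_neg at hcon
      exact hbot (AddSubgroup.ext fun x => ⟨fun h => by
        rw [AddSubgroup.mem_bot]; exact hcon x h,
        fun h => by rw [AddSubgroup.mem_bot] at h; rw [h]; exact H.zero_mem⟩)
    by_cases hbdd : ∃ b : ℤ, ∀ v : ℤ, (∃ x ∈ H, x ≠ 0 ∧ x.valuation = v) → b ≤ v
    · -- valuations bounded below: H = p^r ℤ_p
      obtain ⟨r, ⟨x, hxH, hx, hxv⟩, hleast⟩ :=
        Int.exists_least_of_bdd hbdd ⟨x0.valuation, x0, hx0H, hx0, rfl⟩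
      refine Or.inr ⟨r, Set.Subset.antisymm ?_ ?_⟩
      · intro z hz
        rw [Set.mem_setOf_eq, ball_char]
        by_cases hz0 : z = 0
        · simp [hz0]; positivity
        · rw [Padic.norm_eq_zpow_neg_valuation hz0]
          have : r ≤ z.valuation := hleast _ ⟨z, hz, hz0, rfl⟩
          exact zpow_le_zpow_right₀ hp1.le (by linarith)
      · intro z hz
        rw [Set.mem_setOf_eq, ball_char] at hz
        by_cases hz0 : z = 0
        · simpa [hz0] using H.zero_mem
        · have hxn : ‖x‖ = (p : ℝ) ^ (-r) := by rw [Padic.norm_eq_zpow_neg_valuation hx, hxv]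
          have hq : ‖z / x‖ ≤ 1 := by
            rw [norm_div, hxn, div_le_one (by positivity)]
            exact hz
          have := mul_int_mem hc hxH ⟨z / x, hq⟩
          simpa [mul_div_cancel₀ _ hx] using this
    · -- valuations unbounded below: H = ℚ_p
      push_neg at hbdd
      refine Or.inl (Set.eq_univ_iff_forall.mpr fun z => ?_)
      by_cases hz0 : z = 0
      · simpa [hz0] using H.zero_mem
      · obtain ⟨v, ⟨x, hxH, hx, hxv⟩, hv⟩ := hbdd z.valuation
        have hq : ‖z / x‖ ≤ 1 := by
          rw [norm_div, Padic.norm_eq_zpow_neg_valuation hz0, Padic.norm_eq_zpow_neg_valuation hx, hxv,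
            div_le_one (by positivity)]
          exact zpow_le_zpow_right₀ hp1.le (by linarith)
        have := mul_int_mem hc hxH ⟨z / x, hq⟩
        simpa [mul_div_cancel₀ _ hx] using this
  · rintro (huniv | ⟨r, hr⟩)
    · refine ⟨huniv ▸ isClosed_univ, fun hb => ?_⟩
      have : (1 : ℚ_[p]) ∈ H := by
        have h1 : (1 : ℚ_[p]) ∈ (H : Set ℚ_[p]) := by rw [huniv]; trivial
        exact h1
      rw [hb] at this
      simp at this
    · constructor
      · have : (H : Set ℚ_[p]) = {x : ℚ_[p] | ‖x‖ ≤ (p : ℝ) ^ (-r)} := by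
          rw [hr]; ext x; exact ball_char r x
        rw [this]
        exact isClosed_le continuous_norm continuous_const
      · intro hb
        have : (p : ℚ_[p]) ^ r ∈ H := by
          rw [← AddSubgroup.mem_carrier]
          show (p : ℚ_[p]) ^ r ∈ (H : Set ℚ_[p])
          rw [hr]
          exact ⟨1, by simp⟩
        rw [hb, AddSubgroup.mem_bot] at this
        exact zpow_ne_zero r hpQ this
end
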